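/- Suppose w_{ij} = w_{ji} for all distinct pegs i, j ∈ {1,2,3}. Then for all n ≥ 1 and distinct pegs i, j with intermediate peg k = 6 − i − j, one has C_n^{i,j} = C_n^{j,i}; moreover C_1^{i,j} = min(w_{ij}, w_{ik} + w_{kj}), and for n ≥ 2, C_n^{i,j} = min(C_{n−1}^{i,k} + C_{n−1}^{k,j} + w_{ij}, 3·C_{n−1}^{i,j} + w_{ik} + w_{kj}). -/

import Mathlib

/-- Pegs are natural numbers; the valid pegs are 1, 2, 3. -/
abbrev Peg := ℕ

/-- A peg is valid if it is one of 1, 2, 3. -/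
def validPeg (p : Peg) : Prop := p = 1 ∨ p = 2 ∨ p = 3

/-- A configuration of `n` discs assigns to each disc (indexed by size,
smaller index = smaller disc) the peg it lies on. -/
abbrev Conf (n : ℕ) := Fin n → Peg

/-- `LegalMove c c' i j` : the configuration `c'` results from `c` by a single
legal move of the topmost (smallest) disc of peg `i` onto a different peg `j`,
where every disc currently on peg `j` is larger. -/
def LegalMove {n : ℕ} (c c' : Conf n) (i j : Peg) : Prop :=
  validPeg i ∧ validPeg j ∧ i ≠ j ∧
  ∃ d : Fin n, c d = i ∧ (∀ d', c d' = i → d ≤ d') ∧ (∀ d', c d' = j → d < d') ∧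
    c' d = j ∧ (∀ d', d' ≠ d → c' d' = c d')

/-- `Solves c ms c'` : the list of moves `ms` (each move recorded as the ordered
pair (source peg, destination peg)) legally transforms configuration `c` into `c'`. -/
inductive Solves {n : ℕ} : Conf n → List (Peg × Peg) → Conf n → Prop
  | nil (c : Conf n) : Solves c [] c
  | cons {c c' c'' : Conf n} {ms : List (Peg × Peg)} {i j : Peg} :
      LegalMove c c' i j → Solves c' ms c'' → Solves c ((i, j) :: ms) c''

/-- A solution from peg `i` to peg `j` with `n` discs: a list of legal moves
transforming the configuration with all discs on peg `i` into the configuration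
with all discs on peg `j`. -/
def IsSolution (n : ℕ) (i j : Peg) (ms : List (Peg × Peg)) : Prop :=
  Solves (fun _ : Fin n => i) ms (fun _ : Fin n => j)

/-- Total cost of a sequence of moves with respect to the weight function `w`. -/
noncomputable def cost (w : Peg → Peg → ℝ) (ms : List (Peg × Peg)) : ℝ :=
  (ms.map fun m => w m.1 m.2).sum

/-- `C w n i j` : the optimal (minimum) total cost over all solutions
from peg `i` to peg `j` with `n` discs. -/
noncomputable def C (w : Peg → Peg → ℝ) (n : ℕ) (i j : Peg) : ℝ :=
  sInf {x : ℝ | ∃ ms : List (Peg × Peg), IsSolution n i j ms ∧ cost w ms = x}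


section Aux

/-- The third peg. -/
def third (i j : Peg) : Peg := 6 - i - j

lemma validPeg_third {i j : Peg} (hi : validPeg i) (hj : validPeg j) (hij : i ≠ j) :
    validPeg (third i j) ∧ third i j ≠ i ∧ third i j ≠ j ∧ third j i = third i j := by
  rcases hi with rfl | rfl | rfl <;> rcases hj with rfl | rfl | rfl <;> simp_all [third, validPeg]

lemma eq_third {i j p : Peg} (hi : validPeg i) (hj : validPeg j) (hij : i ≠ j)
    (hp : validPeg p) (h1 : p ≠ i) (h2 : p ≠ j) : p = third i j := by
  rcases hi with rfl | rfl | rfl <;> rcases hj with rfl | rfl | rfl <;>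
    rcases hp with rfl | rfl | rfl <;> simp_all [third, validPeg]

lemma cost_nonneg (w : Peg → Peg → ℝ) (hw : ∀ i j : Peg, 0 ≤ w i j) (ms : List (Peg × Peg)) :
    0 ≤ cost w ms := by
  induction ms with
  | nil => simp [cost]
  | cons m ms ih =>
    simp only [cost, List.map_cons, List.sum_cons] at *
    have := hw m.1 m.2
    linarith

lemma cost_cons (w : Peg → Peg → ℝ) (m : Peg × Peg) (ms : List (Peg × Peg)) :
    cost w (m :: ms) = w m.1 m.2 + cost w ms := by simp [cost]

lemma cost_append (w : Peg → Peg → ℝ) (ms1 ms2 : List (Peg × Peg)) :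
    cost w (ms1 ++ ms2) = cost w ms1 + cost w ms2 := by simp [cost]

lemma Solves.append {n : ℕ} {a b c : Conf n} {ms1 ms2 : List (Peg × Peg)}
    (h1 : Solves a ms1 b) (h2 : Solves b ms2 c) : Solves a (ms1 ++ ms2) c := by
  induction h1 with
  | nil => simpa
  | cons hm _ ih => exact Solves.cons hm (ih h2)

/-- All discs are on valid pegs. -/
def AllValid {n : ℕ} (c : Conf n) : Prop := ∀ d, validPeg (c d)

lemma AllValid.const {n : ℕ} {p : Peg} (hp : validPeg p) : AllValid (fun _ : Fin n => p) :=
  fun _ => hp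

lemma LegalMove.allValid {n : ℕ} {c c' : Conf n} {i j : Peg} (h : LegalMove c c' i j)
    (hc : AllValid c) : AllValid c' := by
  obtain ⟨hi, hj, hij, d, hcd, _, _, hc'd, hother⟩ := h
  intro d'
  by_cases hd : d' = d
  · subst hd; rw [hc'd]; exact hj
  · rw [hother d' hd]; exact hc d'

lemma Solves.allValid {n : ℕ} {a b : Conf n} {ms : List (Peg × Peg)}
    (h : Solves a ms b) (ha : AllValid a) : AllValid b := by
  induction h with
  | nil => exact ha
  | cons hm _ ih => exact ih (hm.allValid ha)

/-- A legal move can be reversed. -/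
lemma LegalMove.symm {n : ℕ} {c c' : Conf n} {i j : Peg} (h : LegalMove c c' i j) :
    LegalMove c' c j i := by
  obtain ⟨hi, hj, hij, d, hcd, hmin, htgt, hc'd, hother⟩ := h
  refine ⟨hj, hi, hij.symm, d, hc'd, ?_, ?_, hcd, fun d' hd' => (hother d' hd').symm⟩
  · intro d' hd'
    by_cases hd : d' = d
    · subst hd; exact le_rfl
    · exact le_of_lt (htgt d' (by rwa [hother d' hd] at hd'))
  · intro d' hd'
    by_cases hd : d' = d
    · subst hd; rw [hc'd] at hd'; exact absurd hd'.symm hij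
    · rw [hother d' hd] at hd'
      exact lt_of_le_of_ne (hmin d' hd') (Ne.symm hd)

lemma Solves.symm {n : ℕ} {a b : Conf n} {ms : List (Peg × Peg)} (h : Solves a ms b) :
    Solves b (ms.reverse.map (fun m => (m.2, m.1))) a := by
  induction h with
  | nil => exact Solves.nil _
  | cons hm _ ih =>
    rw [List.reverse_cons, List.map_append]
    exact ih.append (Solves.cons hm.symm (Solves.nil _))

/-- Every move in a solution uses valid, distinct pegs. -/
lemma Solves.moves_valid {n : ℕ} {a b : Conf n} {ms : List (Peg × Peg)} (h : Solves a ms b) :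
    ∀ m ∈ ms, validPeg m.1 ∧ validPeg m.2 ∧ m.1 ≠ m.2 := by
  induction h with
  | nil => simp
  | cons hm _ ih =>
    intro m hm'
    rcases List.mem_cons.1 hm' with rfl | hm''
    · exact ⟨hm.1, hm.2.1, hm.2.2.1⟩
    · exact ih m hm''

end Aux
section Cc

/-- Optimal cost between two arbitrary configurations. -/
noncomputable def Cc (w : Peg → Peg → ℝ) {n : ℕ} (a b : Conf n) : ℝ :=
  sInf {x : ℝ | ∃ ms : List (Peg × Peg), Solves a ms b ∧ cost w ms = x}

variable {w : Peg → Peg → ℝ}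

lemma C_eq_Cc (n : ℕ) (i j : Peg) : C w n i j = Cc w (fun _ : Fin n => i) (fun _ : Fin n => j) :=
  rfl

lemma Cc_bddBelow (hw : ∀ i j : Peg, 0 ≤ w i j) {n : ℕ} (a b : Conf n) :
    BddBelow {x : ℝ | ∃ ms : List (Peg × Peg), Solves a ms b ∧ cost w ms = x} := by
  refine ⟨0, fun x hx => ?_⟩
  obtain ⟨ms, _, rfl⟩ := hx
  exact cost_nonneg w hw ms

lemma Cc_le_cost (hw : ∀ i j : Peg, 0 ≤ w i j) {n : ℕ} {a b : Conf n}
    {ms : List (Peg × Peg)} (h : Solves a ms b) : Cc w a b ≤ cost w ms :=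
  csInf_le (Cc_bddBelow hw a b) ⟨ms, h, rfl⟩

lemma Cc_nonneg (hw : ∀ i j : Peg, 0 ≤ w i j) {n : ℕ} (a b : Conf n) : 0 ≤ Cc w a b := by
  apply Real.sInf_nonneg
  rintro x ⟨ms, _, rfl⟩
  exact cost_nonneg w hw ms

lemma Cc_self (hw : ∀ i j : Peg, 0 ≤ w i j) {n : ℕ} (a : Conf n) : Cc w a a = 0 := by
  refine le_antisymm ?_ (Cc_nonneg hw a a)
  have := Cc_le_cost hw (Solves.nil a)
  simpa [cost] using this

lemma le_Cc {n : ℕ} {a b : Conf n} {r : ℝ} (hne : ∃ ms, Solves a ms b)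
    (h : ∀ ms, Solves a ms b → r ≤ cost w ms) : r ≤ Cc w a b := by
  apply le_csInf
  · obtain ⟨ms, hms⟩ := hne; exact ⟨cost w ms, ms, hms, rfl⟩
  · rintro x ⟨ms, hms, rfl⟩; exact h ms hms

lemma Cc_triangle (hw : ∀ i j : Peg, 0 ≤ w i j) {n : ℕ} {a b c : Conf n}
    (h1 : ∃ ms, Solves a ms b) (h2 : ∃ ms, Solves b ms c) :
    Cc w a c ≤ Cc w a b + Cc w b c := by
  have key : ∀ x ∈ {x : ℝ | ∃ ms, Solves a ms b ∧ cost w ms = x},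
      Cc w a c - x ≤ Cc w b c := by
    rintro x ⟨ms1, hms1, rfl⟩
    refine le_csInf (by obtain ⟨ms, hms⟩ := h2; exact ⟨cost w ms, ms, hms, rfl⟩) ?_
    rintro y ⟨ms2, hms2, rfl⟩
    have := Cc_le_cost hw (hms1.append hms2)
    rw [cost_append] at this
    linarith
  have h1' : Cc w a c - Cc w b c ≤ Cc w a b := by
    refine le_csInf (by obtain ⟨ms, hms⟩ := h1; exact ⟨cost w ms, ms, hms, rfl⟩) ?_
    intro x hx
    have := key x hx
    linarith
  linarith

lemma Cc_prepend (hw : ∀ i j : Peg, 0 ≤ w i j) {n : ℕ} {a a' b : Conf n} {i j : Peg}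
    (hm : LegalMove a a' i j) (hne : ∃ ms, Solves a' ms b) :
    Cc w a b ≤ w i j + Cc w a' b := by
  have : Cc w a b - w i j ≤ Cc w a' b := by
    refine le_csInf (by obtain ⟨ms, hms⟩ := hne; exact ⟨cost w ms, ms, hms, rfl⟩) ?_
    rintro x ⟨ms, hms, rfl⟩
    have := Cc_le_cost hw (Solves.cons hm hms)
    rw [cost_cons] at this
    linarith
  linarith

end Cc
section Lift

/-- Restriction of a configuration to the smaller discs. -/
def res {m : ℕ} (c : Conf (m + 1)) : Conf m := fun d => c d.castSucc

lemma res_snoc {m : ℕ} (c : Conf m) (p : Peg) : res (Fin.snoc c p) = c := by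
  funext d; simp [res]

lemma snoc_res {m : ℕ} (c : Conf (m + 1)) : Fin.snoc (res c) (c (Fin.last m)) = c := by
  funext d
  induction d using Fin.lastCases with
  | last => simp
  | cast e => simp [res]

lemma snoc_const {m : ℕ} (p : Peg) :
    (Fin.snoc (fun _ : Fin m => p) p : Conf (m + 1)) = fun _ => p := by
  funext d
  induction d using Fin.lastCases with
  | last => simp
  | cast e => simp

/-- A legal move of the small discs lifts to any position of the large disc. -/
lemma LegalMove.lift {m : ℕ} {a a' : Conf m} {i j : Peg} (h : LegalMove a a' i j) (p : Peg) :
    LegalMove (Fin.snoc a p) (Fin.snoc a' p) i j := by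
  obtain ⟨hi, hj, hij, d, hcd, hmin, htgt, hc'd, hother⟩ := h
  refine ⟨hi, hj, hij, d.castSucc, by simpa, ?_, ?_, by simpa, ?_⟩
  · intro d' hd'
    induction d' using Fin.lastCases with
    | last => exact le_of_lt (Fin.castSucc_lt_last d)
    | cast e =>
      simp only [Fin.snoc_castSucc] at hd'
      exact Fin.castSucc_le_castSucc_iff.2 (hmin e hd')
  · intro d' hd'
    induction d' using Fin.lastCases with
    | last => exact Fin.castSucc_lt_last d
    | cast e =>
      simp only [Fin.snoc_castSucc] at hd'
      exact Fin.castSucc_lt_castSucc_iff.2 (htgt e hd')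
  · intro d' hd'
    induction d' using Fin.lastCases with
    | last => simp
    | cast e =>
      have : e ≠ d := fun h => hd' (by rw [h])
      simp [hother e this]

lemma Solves.lift {m : ℕ} {a b : Conf m} {ms : List (Peg × Peg)} (h : Solves a ms b) (p : Peg) :
    Solves (Fin.snoc a p) ms (Fin.snoc b p) := by
  induction h with
  | nil => exact Solves.nil _
  | cons hm _ ih => exact Solves.cons (hm.lift p) ih

/-- Moving the large disc from `p` to `q` when all small discs are on the third peg. -/
lemma bigMove {m : ℕ} {t p q : Peg} (hp : validPeg p) (hq : validPeg q) (hpq : p ≠ q)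
    (htp : t ≠ p) (htq : t ≠ q) :
    LegalMove (Fin.snoc (fun _ : Fin m => t) p) (Fin.snoc (fun _ : Fin m => t) q) p q := by
  refine ⟨hp, hq, hpq, Fin.last m, by simp, ?_, ?_, by simp, ?_⟩
  · intro d' hd'
    induction d' using Fin.lastCases with
    | last => exact le_rfl
    | cast e => simp only [Fin.snoc_castSucc] at hd'; exact absurd hd' htp
  · intro d' hd'
    induction d' using Fin.lastCases with
    | last => simp only [Fin.snoc_last] at hd'; exact absurd hd' hpq
    | cast e => simp only [Fin.snoc_castSucc] at hd'; exact absurd hd' htq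
  · intro d' hd'
    induction d' using Fin.lastCases with
    | last => exact absurd rfl hd'
    | cast e => simp

/-- Any valid configuration can be gathered onto any valid peg. -/
lemma gather : ∀ (m : ℕ) (c : Conf m), AllValid c → ∀ r : Peg, validPeg r →
    ∃ ms, Solves c ms (fun _ => r) := by
  intro m
  induction m with
  | zero =>
    intro c _ r _
    have : c = fun _ => r := funext fun d => d.elim0
    exact ⟨[], this ▸ Solves.nil c⟩
  | succ m ih =>
    intro c hc r hr
    set p := c (Fin.last m) with hpdef
    have hcp : c = Fin.snoc (res c) p := (snoc_res c).symm
    have hresv : AllValid (res c) := fun d => hc d.castSucc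
    by_cases hppr : p = r
    · obtain ⟨ms, hms⟩ := ih (res c) hresv r hr
      refine ⟨ms, ?_⟩
      have := hms.lift p
      rwa [← hcp, hppr, snoc_const] at this
    · have hp : validPeg p := hc (Fin.last m)
      obtain ⟨hvt, htp, htr, -⟩ := validPeg_third hp hr hppr
      set t := third p r
      obtain ⟨ms1, hms1⟩ := ih (res c) hresv t hvt
      obtain ⟨ms2, hms2⟩ := ih (fun _ => t) (AllValid.const hvt) r hr
      have s1 : Solves c ms1 (Fin.snoc (fun _ => t) p) := by
        have := hms1.lift p; rwa [← hcp] at this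
      have s2 : LegalMove (Fin.snoc (fun _ : Fin m => t) p) (Fin.snoc (fun _ : Fin m => t) r) p r :=
        bigMove hp hr hppr htp htr
      have s3 : Solves (Fin.snoc (fun _ : Fin m => t) r) ms2 (fun _ => r) := by
        have := hms2.lift r; rwa [snoc_const] at this
      exact ⟨ms1 ++ (p, r) :: ms2, s1.append (Solves.cons s2 s3)⟩

/-- Any two valid configurations are connected. -/
lemma conn {m : ℕ} {a b : Conf m} (ha : AllValid a) (hb : AllValid b) :
    ∃ ms, Solves a ms b := by
  obtain ⟨ms1, h1⟩ := gather m a ha 1 (Or.inl rfl)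
  obtain ⟨ms2, h2⟩ := gather m b hb 1 (Or.inl rfl)
  exact ⟨ms1 ++ ms2.reverse.map (fun x => (x.2, x.1)), h1.append h2.symm⟩

end Lift
section Split

variable {w : Peg → Peg → ℝ}

/-- Case analysis for a legal move with `m+1` discs: either the big disc moves
(and all small discs sit on the third peg), or a small disc moves. -/
lemma move_cases {m : ℕ} {c c' : Conf (m + 1)} {i j : Peg}
    (h : LegalMove c c' i j) (hc : AllValid c) :
    (c (Fin.last m) = i ∧ c' (Fin.last m) = j ∧ res c' = res c ∧
      res c = fun _ => third i j) ∨
    (c' (Fin.last m) = c (Fin.last m) ∧ LegalMove (res c) (res c') i j) := by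
  obtain ⟨hi, hj, hij, d, hcd, hmin, htgt, hc'd, hother⟩ := h
  by_cases hd : d = Fin.last m
  · subst hd
    left
    have hres : res c' = res c := by
      funext e
      exact hother e.castSucc (Fin.castSucc_lt_last e).ne
    refine ⟨hcd, hc'd, hres, ?_⟩
    funext e
    have h1 : res c e ≠ i := fun he =>
      absurd (hmin e.castSucc he) (not_le.2 (Fin.castSucc_lt_last e))
    have h2 : res c e ≠ j := fun he =>
      absurd (htgt e.castSucc he) (not_lt.2 (le_of_lt (Fin.castSucc_lt_last e)))
    exact eq_third hi hj hij (hc e.castSucc) h1 h2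
  · right
    obtain ⟨e, rfl⟩ := Fin.exists_castSucc_eq.2 hd
    constructor
    · exact hother (Fin.last m) (Ne.symm hd)
    · refine ⟨hi, hj, hij, e, hcd, ?_, ?_, hc'd, ?_⟩
      · intro e' he'
        exact Fin.castSucc_le_castSucc_iff.1 (hmin e'.castSucc he')
      · intro e' he'
        exact Fin.castSucc_lt_castSucc_iff.1 (htgt e'.castSucc he')
      · intro e' he'
        exact hother e'.castSucc (fun hh => he' (by
          exact Fin.castSucc_injective _ hh))

/-- The segment lower bound functional: given the final (restricted)
configuration `b`, a path of the big disc, and the current (restricted)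
configuration `a`, the cheapest conceivable cost. -/
noncomputable def segC (w : Peg → Peg → ℝ) {m : ℕ} (b : Conf m) :
    List Peg → Conf m → ℝ
  | [], _ => 0
  | [_], a => Cc w a b
  | p :: p' :: rest, a =>
      Cc w a (fun _ => third p p') + w p p' +
        segC w b (p' :: rest) (fun _ => third p p')

lemma segC_nonneg (hw : ∀ i j : Peg, 0 ≤ w i j) {m : ℕ} (b : Conf m) :
    ∀ (path : List Peg) (a : Conf m), 0 ≤ segC w b path a
  | [], a => le_refl 0
  | [_], a => Cc_nonneg hw _ _
  | p :: p' :: rest, a => by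
      have h1 := Cc_nonneg hw (w := w) a (fun _ => third p p')
      have h2 := hw p p'
      have h3 := segC_nonneg hw b (p' :: rest) (fun _ => third p p')
      simp only [segC]
      linarith

/-- Changing the current configuration costs at most the transfer cost. -/
lemma segC_cut (hw : ∀ i j : Peg, 0 ≤ w i j) {m : ℕ} {b : Conf m}
    (hb : AllValid b) {a a' : Conf m} (ha : AllValid a) (ha' : AllValid a')
    (path : List Peg) (hv : ∀ p ∈ path, validPeg p) (hch : path.Chain' (· ≠ ·)) :
    segC w b path a ≤ Cc w a a' + segC w b path a' := by
  match path with
  | [] =>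
    simp only [segC]
    have := Cc_nonneg hw (w := w) a a'
    linarith
  | [p] =>
    simp only [segC]
    exact Cc_triangle hw (conn ha ha') (conn ha' hb)
  | p :: p' :: rest =>
    simp only [segC]
    have hp : validPeg p := hv p (by simp)
    have hp' : validPeg p' := hv p' (by simp)
    have hpp' : p ≠ p' := (List.isChain_cons_cons.1 hch).1
    have hX : AllValid (fun _ : Fin m => third p p') :=
      AllValid.const (validPeg_third hp hp' hpp').1
    have := Cc_triangle hw (w := w) (conn ha ha') (conn ha' hX)
    linarith

lemma segC_move (hw : ∀ i j : Peg, 0 ≤ w i j) {m : ℕ} {b : Conf m}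
    (hb : AllValid b) {a a' : Conf m} {i j : Peg} (hm : LegalMove a a' i j)
    (ha' : AllValid a')
    (path : List Peg) (hv : ∀ p ∈ path, validPeg p) (hch : path.Chain' (· ≠ ·)) :
    segC w b path a ≤ w i j + segC w b path a' := by
  match path with
  | [] =>
    simp only [segC]
    have := hw i j
    linarith
  | [p] =>
    simp only [segC]
    exact Cc_prepend hw hm (conn ha' hb)
  | p :: p' :: rest =>
    simp only [segC]
    have hp : validPeg p := hv p (by simp)
    have hp' : validPeg p' := hv p' (by simp)
    have hpp' : p ≠ p' := (List.isChain_cons_cons.1 hch).1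
    have hX : AllValid (fun _ : Fin m => third p p') :=
      AllValid.const (validPeg_third hp hp' hpp').1
    have := Cc_prepend hw hm (conn ha' hX)
    linarith

/-- The fundamental splitting lower bound. -/
lemma split (hw : ∀ i j : Peg, 0 ≤ w i j) {m : ℕ} {c : Conf (m + 1)}
    {ms : List (Peg × Peg)} {c'' : Conf (m + 1)}
    (h : Solves c ms c'') (hc : AllValid c) :
    ∃ qs : List Peg, (∀ q ∈ qs, validPeg q) ∧
      (c (Fin.last m) :: qs).Chain' (· ≠ ·) ∧
      (c (Fin.last m) :: qs).getLast? = some (c'' (Fin.last m)) ∧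
      segC w (res c'') (c (Fin.last m) :: qs) (res c) ≤ cost w ms := by
  induction h with
  | nil c =>
    refine ⟨[], by simp, List.isChain_singleton _, by simp, ?_⟩
    simp only [segC, cost, List.map_nil, List.sum_nil]
    exact le_of_eq (Cc_self hw (res c))
  | @cons c c' c'' ms i0 j0 hm hs ih =>
    have hc' : AllValid c' := hm.allValid hc
    have hc'' : AllValid c'' := hs.allValid hc'
    obtain ⟨qs', hv', hch', hlast', hseg'⟩ := ih hc'
    rcases move_cases hm hc with ⟨hbl, hbl', hres, hconst⟩ | ⟨hsl, hm'⟩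
    · -- big move
      refine ⟨j0 :: qs', ?_, ?_, ?_, ?_⟩
      · intro q hq
        rcases List.mem_cons.1 hq with rfl | hq'
        · exact hm.2.1
        · exact hv' q hq'
      · refine List.isChain_cons_cons.2 ?_; rw [hbl]
        exact ⟨hm.2.2.1, by rwa [hbl'] at hch'⟩
      · rw [List.getLast?_cons_cons, ← hbl']
        exact hlast'
      · rw [cost_cons]
        simp only [segC, hbl]
        have e1 : Cc w (res c) (fun _ => third i0 j0) = 0 := by
          rw [hconst]; exact Cc_self hw _
        have e2 : segC w (res c'') (j0 :: qs') (fun _ => third i0 j0) =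
            segC w (res c'') (c' (Fin.last m) :: qs') (res c') := by
          rw [hbl', hres, hconst]
        rw [e1, e2]
        simp only [zero_add]
        linarith
    · -- small move
      refine ⟨qs', hv', by rwa [hsl] at hch', by rwa [hsl] at hlast', ?_⟩
      rw [cost_cons]
      have hvpath : ∀ p ∈ c (Fin.last m) :: qs', validPeg p := by
        intro p hp
        rcases List.mem_cons.1 hp with rfl | hp'
        · exact hc (Fin.last m)
        · exact hv' p hp'
      have hres' : AllValid (res c') := fun d => hc' d.castSucc
      have hres'' : AllValid (res c'') := fun d => hc'' d.castSucc
      have := segC_move hw hres'' hm' hres' (c (Fin.last m) :: qs') hvpath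
        (by rwa [hsl] at hch')
      rw [hsl] at hseg'
      linarith

end Split
section Key

variable {w : Peg → Peg → ℝ}

lemma key (hw : ∀ i j : Peg, 0 ≤ w i j) {m : ℕ} :
    ∀ (N : ℕ) (path : List Peg) (x y : Peg), path.length = N →
      validPeg x → validPeg y → x ≠ y →
      (∀ p ∈ path, validPeg p) → path.Chain' (· ≠ ·) →
      path.head? = some x → path.getLast? = some y →
      min (Cc w (fun _ : Fin m => x) (fun _ => third x y) +
            Cc w (fun _ : Fin m => third x y) (fun _ => y) + w x y)
          (Cc w (fun _ : Fin m => x) (fun _ => y) + Cc w (fun _ : Fin m => y) (fun _ => x) +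
            Cc w (fun _ : Fin m => x) (fun _ => y) + w x (third x y) + w (third x y) y)
        ≤ segC w (fun _ : Fin m => y) path (fun _ => x) := by
  intro N
  induction N using Nat.strong_induction_on with
  | _ N IH =>
  intro path x y hlen hx hy hxy hv hch hhead hlast
  rcases path with _ | ⟨p, _ | ⟨p1, _ | ⟨p2, _ | ⟨p3, rest⟩⟩⟩⟩
  · simp at hhead
  · simp at hhead hlast
    exact absurd (hhead.symm.trans hlast) hxy
  · -- path = [x, y] : the big disc moves once, directly
    simp at hhead hlast
    subst hhead; subst hlast
    simp only [segC]
    refine le_trans (min_le_left _ _) ?_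
    linarith
  · -- path = [x, z, y] : the big disc moves twice, via the third peg
    simp at hhead hlast
    subst hhead; subst hlast
    have hvz : validPeg p1 := hv p1 (by simp)
    have hxz : p ≠ p1 := (List.isChain_cons_cons.1 hch).1
    have hzy : p1 ≠ p2 := (List.isChain_cons_cons.1 (List.isChain_cons_cons.1 hch).2).1
    have e1 : p2 = third p p1 := eq_third hx hvz hxz hy (Ne.symm hxy) (Ne.symm hzy)
    have e2 : p = third p1 p2 := eq_third hvz hy hzy hx hxz hxy
    have e3 : p1 = third p p2 := eq_third hx hy hxy hvz (Ne.symm hxz) hzy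
    simp only [segC, ← e1, ← e2]
    rw [show w p p1 = w p (third p p2) from by rw [← e3],
        show w p1 p2 = w (third p p2) p2 from by rw [← e3]]
    refine le_trans (min_le_right _ _) ?_
    linarith
  · -- path = p :: p1 :: p2 :: p3 :: rest  (p plays the role of x)
    have hpx : p = x := by simpa using hhead
    subst hpx
    have hp1 : validPeg p1 := hv p1 (by simp)
    have hp2 : validPeg p2 := hv p2 (by simp)
    have hp3 : validPeg p3 := hv p3 (by simp)
    have hx1 : p ≠ p1 := (List.isChain_cons_cons.1 hch).1
    have hch1 := (List.isChain_cons_cons.1 hch).2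
    have h12 : p1 ≠ p2 := (List.isChain_cons_cons.1 hch1).1
    have hch2 := (List.isChain_cons_cons.1 hch1).2
    have h23 : p2 ≠ p3 := (List.isChain_cons_cons.1 hch2).1
    have hch3 := (List.isChain_cons_cons.1 hch2).2
    have hvKy : AllValid (fun _ : Fin m => y) := AllValid.const hy
    rw [List.getLast?_cons_cons, List.getLast?_cons_cons, List.getLast?_cons_cons] at hlast
    by_cases hp2x : p2 = p
    · -- backtrack at the start : drop the first two edges
      have hp2x' : p = p2 := hp2x.symm
      subst hp2x'
      have hcomm : third p1 p = third p p1 := (validPeg_third hx hp1 hx1).2.2.2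
      have hvr : validPeg (third p p1) := (validPeg_third hx hp1 hx1).1
      have hvT3 : validPeg (third p p3) := (validPeg_third hx hp3 h23).1
      have htri : Cc w (fun _ : Fin m => p) (fun _ => third p p3) ≤
          Cc w (fun _ : Fin m => p) (fun _ => third p p1) +
          Cc w (fun _ : Fin m => third p p1) (fun _ => third p p3) :=
        Cc_triangle hw (conn (AllValid.const hx) (AllValid.const hvr))
          (conn (AllValid.const hvr) (AllValid.const hvT3))
      have hIH := IH (p3 :: rest).length.succ
        (by simp only [List.length_cons] at hlen ⊢; omega)
        (p :: p3 :: rest) p y rfl hx hy hxy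
        (by intro q hq; apply hv; simp only [List.mem_cons] at hq ⊢; tauto)
        (List.isChain_cons_cons.2 ⟨h23, hch3⟩) (by simp)
        (by rw [List.getLast?_cons_cons]; exact hlast)
      simp only [segC] at hIH ⊢
      simp only [hcomm]
      have n1 := Cc_nonneg hw (w := w) (fun _ : Fin m => p) (fun _ => third p p1)
      have n2 := Cc_nonneg hw (w := w) (fun _ : Fin m => third p p1) (fun _ => third p p1)
      have n3 := hw p p1
      have n4 := hw p1 p
      linarith
    · have ep2 : p2 = third p p1 := eq_third hx hp1 hx1 hp2 hp2x (Ne.symm h12)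
      have ex : p = third p1 p2 := eq_third hp1 hp2 h12 hx hx1 (Ne.symm hp2x)
      by_cases hp31 : p3 = p1
      · -- backtrack in the middle : drop the second and third edges
        have hp31' : p1 = p3 := hp31.symm
        subst hp31'
        have ex2 : p = third p2 p1 := eq_third hp2 hp1 (Ne.symm h12) hx (Ne.symm hp2x) hx1
        have hcut : segC w (fun _ => y) (p1 :: rest) (fun _ : Fin m => p2) ≤
            Cc w (fun _ : Fin m => p2) (fun _ => p) +
            segC w (fun _ => y) (p1 :: rest) (fun _ : Fin m => p) :=
          segC_cut hw hvKy (AllValid.const hp2) (AllValid.const hx) (p1 :: rest)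
            (by intro q hq; apply hv; simp only [List.mem_cons] at hq ⊢; tauto) hch3
        have hIH := IH (p1 :: rest).length.succ
          (by simp only [List.length_cons] at hlen ⊢; omega)
          (p :: p1 :: rest) p y rfl hx hy hxy
          (by intro q hq; apply hv; simp only [List.mem_cons] at hq ⊢; tauto)
          (List.isChain_cons_cons.2 ⟨hx1, hch3⟩) (by simp)
          (by rw [List.getLast?_cons_cons]; exact hlast)
        simp only [segC, ← ep2, ← ex, ← ex2] at hIH ⊢
        have n1 := Cc_nonneg hw (w := w) (fun _ : Fin m => p) (fun _ => p)
        have n2 := hw p1 p2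
        have n3 := hw p2 p1
        linarith
      · -- no backtrack : the path rotates, p3 = p ; drop the first three edges
        have e3 : p3 = third p1 p2 := eq_third hp1 hp2 h12 hp3 hp31 (Ne.symm h23)
        have hp3x : p = p3 := (e3.trans ex.symm).symm
        subst hp3x
        have ep1 : p1 = third p2 p := eq_third hp2 hx hp2x hp1 h12 (Ne.symm hx1)
        have hcut : segC w (fun _ => y) (p :: rest) (fun _ : Fin m => p) ≤
            Cc w (fun _ : Fin m => p) (fun _ => p1) +
            segC w (fun _ => y) (p :: rest) (fun _ : Fin m => p1) :=
          segC_cut hw hvKy (AllValid.const hx) (AllValid.const hp1) (p :: rest)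
            (by intro q hq; apply hv; simp only [List.mem_cons] at hq ⊢; tauto) hch3
        have hIH := IH (p :: rest).length
          (by simp only [List.length_cons] at hlen ⊢; omega)
          (p :: rest) p y rfl hx hy hxy
          (by intro q hq; apply hv; simp only [List.mem_cons] at hq ⊢; tauto)
          hch3 (by simp) hlast
        simp only [segC, ← ep2, ← ex, ← ep1] at hIH ⊢
        have n1 := Cc_nonneg hw (w := w) (fun _ : Fin m => p) (fun _ => p2)
        have n2 := Cc_nonneg hw (w := w) (fun _ : Fin m => p2) (fun _ => p)
        have n3 := hw p p1
        have n4 := hw p1 p2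
        have n5 := hw p2 p
        linarith

end Key
section Final

variable {w : Peg → Peg → ℝ}

lemma le_Cc2 (hw : ∀ i j : Peg, 0 ≤ w i j) {n : ℕ} {a1 b1 a2 b2 : Conf n}
    (h1 : ∃ ms, Solves a1 ms b1) (h2 : ∃ ms, Solves a2 ms b2) {r c : ℝ}
    (H : ∀ ms1 ms2, Solves a1 ms1 b1 → Solves a2 ms2 b2 →
      r ≤ cost w ms1 + c + cost w ms2) :
    r ≤ Cc w a1 b1 + c + Cc w a2 b2 := by
  have h3 : ∀ ms1, Solves a1 ms1 b1 → r - c - cost w ms1 ≤ Cc w a2 b2 := fun ms1 hms1 =>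
    le_Cc h2 (fun ms2 hms2 => by linarith [H ms1 ms2 hms1 hms2])
  have h4 : r - c - Cc w a2 b2 ≤ Cc w a1 b1 :=
    le_Cc h1 (fun ms1 hms1 => by linarith [h3 ms1 hms1])
  linarith

lemma le_Cc3 (hw : ∀ i j : Peg, 0 ≤ w i j) {n : ℕ} {a1 b1 a2 b2 a3 b3 : Conf n}
    (h1 : ∃ ms, Solves a1 ms b1) (h2 : ∃ ms, Solves a2 ms b2)
    (h3 : ∃ ms, Solves a3 ms b3) {r c : ℝ}
    (H : ∀ ms1 ms2 ms3, Solves a1 ms1 b1 → Solves a2 ms2 b2 → Solves a3 ms3 b3 →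
      r ≤ cost w ms1 + cost w ms2 + cost w ms3 + c) :
    r ≤ Cc w a1 b1 + Cc w a2 b2 + Cc w a3 b3 + c := by
  have k3 : ∀ ms1 ms2, Solves a1 ms1 b1 → Solves a2 ms2 b2 →
      r - c - cost w ms1 - cost w ms2 ≤ Cc w a3 b3 := fun ms1 ms2 hms1 hms2 =>
    le_Cc h3 (fun ms3 hms3 => by linarith [H ms1 ms2 ms3 hms1 hms2 hms3])
  have k2 : ∀ ms1, Solves a1 ms1 b1 → r - c - cost w ms1 - Cc w a3 b3 ≤ Cc w a2 b2 :=
    fun ms1 hms1 => le_Cc h2 (fun ms2 hms2 => by linarith [k3 ms1 ms2 hms1 hms2])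
  have k1 : r - c - Cc w a2 b2 - Cc w a3 b3 ≤ Cc w a1 b1 :=
    le_Cc h1 (fun ms1 hms1 => by linarith [k2 ms1 hms1])
  linarith

lemma cost_rev (hsym : ∀ i j : Peg, validPeg i → validPeg j → i ≠ j → w i j = w j i)
    (ms : List (Peg × Peg)) (hv : ∀ m ∈ ms, validPeg m.1 ∧ validPeg m.2 ∧ m.1 ≠ m.2) :
    cost w (ms.reverse.map (fun m => (m.2, m.1))) = cost w ms := by
  unfold cost
  rw [List.map_map, List.map_reverse, List.sum_reverse]
  induction ms with
  | nil => rfl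
  | cons m ms ih =>
    obtain ⟨h1, h2, h3⟩ := hv m (by simp)
    simp only [List.map_cons, List.sum_cons, Function.comp]
    rw [hsym m.1 m.2 h1 h2 h3, ih (fun m' hm' => hv m' (by simp [hm']))]

lemma C_symm (hw : ∀ i j : Peg, 0 ≤ w i j)
    (hsym : ∀ i j : Peg, validPeg i → validPeg j → i ≠ j → w i j = w j i)
    (n : ℕ) {x y : Peg} (hx : validPeg x) (hy : validPeg y) :
    C w n x y = C w n y x := by
  have main : ∀ a b : Peg, validPeg a → validPeg b → C w n a b ≤ C w n b a := by
    intro a b ha hb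
    rw [C_eq_Cc, C_eq_Cc]
    refine le_csInf ?_ ?_
    · obtain ⟨ms, hms⟩ := conn (m := n) (AllValid.const hb) (AllValid.const ha)
      exact ⟨cost w ms, ms, hms, rfl⟩
    · rintro r ⟨ms, hms, rfl⟩
      have hrev := hms.symm
      have hc := cost_rev hsym ms (hms.moves_valid)
      have := Cc_le_cost hw hrev
      rw [hc] at this
      exact this
  exact le_antisymm (main x y hx hy) (main y x hy hx)

lemma C_zero (hw : ∀ i j : Peg, 0 ≤ w i j) (x y : Peg) : C w 0 x y = 0 := by
  have h : (fun _ : Fin 0 => x) = (fun _ : Fin 0 => y) := funext fun d => d.elim0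
  rw [C_eq_Cc, h, Cc_self hw]

/-- The main recursion, in raw (symmetry-free) form. -/
lemma C_rec (hw : ∀ i j : Peg, 0 ≤ w i j) (m : ℕ) {i j : Peg}
    (hi : validPeg i) (hj : validPeg j) (hij : i ≠ j) :
    C w (m + 1) i j = min (C w m i (third i j) + C w m (third i j) j + w i j)
      (C w m i j + C w m j i + C w m i j + w i (third i j) + w (third i j) j) := by
  obtain ⟨hk, hki, hkj, -⟩ := validPeg_third hi hj hij
  set k := third i j with hkdef
  refine le_antisymm (le_min ?_ ?_) ?_
  · -- upper bound, moving the big disc once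
    simp only [C_eq_Cc]
    have H := le_Cc2 hw (n := m)
      (conn (AllValid.const hi) (AllValid.const hk))
      (conn (AllValid.const hk) (AllValid.const hj))
      (r := Cc w (fun _ : Fin (m+1) => i) (fun _ => j)) (c := w i j) ?_
    · linarith [H]
    · intro ms1 ms2 h1 h2
      have s1 : Solves (fun _ : Fin (m+1) => i) ms1 (Fin.snoc (fun _ => k) i) := by
        have := h1.lift i; rwa [snoc_const] at this
      have s2 : LegalMove (Fin.snoc (fun _ : Fin m => k) i) (Fin.snoc (fun _ : Fin m => k) j)
          i j := bigMove hi hj hij hki hkj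
      have s3 : Solves (Fin.snoc (fun _ : Fin m => k) j) ms2 (fun _ : Fin (m+1) => j) := by
        have := h2.lift j; rwa [snoc_const] at this
      have := Cc_le_cost hw (s1.append (Solves.cons s2 s3))
      rw [cost_append, cost_cons] at this
      linarith
  · -- upper bound, moving the big disc twice via k
    simp only [C_eq_Cc]
    have hik : i ≠ k := Ne.symm hki
    have hjk : j ≠ k := Ne.symm hkj
    have H := le_Cc3 hw (n := m)
      (conn (AllValid.const hi) (AllValid.const hj))
      (conn (AllValid.const hj) (AllValid.const hi))
      (conn (AllValid.const hi) (AllValid.const hj))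
      (r := Cc w (fun _ : Fin (m+1) => i) (fun _ => j)) (c := w i k + w k j) ?_
    · linarith [H]
    · intro ms1 ms2 ms3 h1 h2 h3
      have s1 : Solves (fun _ : Fin (m+1) => i) ms1 (Fin.snoc (fun _ => j) i) := by
        have := h1.lift i; rwa [snoc_const] at this
      have s2 : LegalMove (Fin.snoc (fun _ : Fin m => j) i) (Fin.snoc (fun _ : Fin m => j) k)
          i k := bigMove hi hk hik (Ne.symm hij) hjk
      have s3 : Solves (Fin.snoc (fun _ : Fin m => j) k) ms2 (Fin.snoc (fun _ => i) k) :=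
        h2.lift k
      have s4 : LegalMove (Fin.snoc (fun _ : Fin m => i) k) (Fin.snoc (fun _ : Fin m => i) j)
          k j := bigMove hk hj hkj hik hij
      have s5 : Solves (Fin.snoc (fun _ : Fin m => i) j) ms3 (fun _ : Fin (m+1) => j) := by
        have := h3.lift j; rwa [snoc_const] at this
      have := Cc_le_cost hw
        (s1.append (Solves.cons s2 (s3.append (Solves.cons s4 s5))))
      rw [cost_append, cost_cons, cost_append, cost_cons] at this
      linarith
  · -- lower bound
    simp only [C_eq_Cc]
    refine le_Cc (conn (AllValid.const hi) (AllValid.const hj)) ?_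
    intro ms hms
    obtain ⟨qs, hv, hch, hlast, hseg⟩ := split hw hms (AllValid.const hi)
    have hres1 : res (fun _ : Fin (m+1) => j) = (fun _ : Fin m => j) := rfl
    have hres2 : res (fun _ : Fin (m+1) => i) = (fun _ : Fin m => i) := rfl
    rw [hres1, hres2] at hseg
    have hkey := key hw (m := m) (i :: qs).length (i :: qs) i j rfl hi hj hij
      (by intro q hq; rcases List.mem_cons.1 hq with rfl | hq'
          exacts [hi, hv q hq'])
      hch (by simp) hlast
    rw [← hkdef] at hkey
    exact le_trans hkey hseg

end Final
/-- with symmetric weights, `C_n^{i,j} = C_n^{j,i}` and the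
recursion simplifies. -/
theorem stmt6 (w : Peg → Peg → ℝ) (hw : ∀ i j : Peg, 0 ≤ w i j)
    (hsym : ∀ i j : Peg, validPeg i → validPeg j → i ≠ j → w i j = w j i)
    (i j k : Peg) (hi : validPeg i) (hj : validPeg j) (hij : i ≠ j)
    (hk : k = 6 - i - j) :
    (∀ n : ℕ, 1 ≤ n → C w n i j = C w n j i) ∧
    C w 1 i j = min (w i j) (w i k + w k j) ∧
    (∀ n : ℕ, 2 ≤ n →
      C w n i j = min (C w (n - 1) i k + C w (n - 1) k j + w i j)
        (3 * C w (n - 1) i j + w i k + w k j)) := by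
  have hk' : k = third i j := hk
  refine ⟨fun n _ => C_symm hw hsym n hi hj, ?_, ?_⟩
  · have h := C_rec hw 0 hi hj hij
    rw [← hk'] at h
    rw [h]
    simp [C_zero hw]
  · intro n hn
    obtain ⟨m, rfl⟩ : ∃ m, n = m + 1 := ⟨n - 1, by omega⟩
    have h := C_rec hw m hi hj hij
    rw [← hk'] at h
    simp only [Nat.add_sub_cancel]
    rw [h, C_symm hw hsym m hj hi]
    congr 1
    ring
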